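/- arXiv:2504.00119 — 3 statements merged into one kernel-verified Lean document; each statement's English description precedes it below -/
import Mathlib

section
/- Suppose κ ≤ λ are regular cardinals with λ^{<κ} = λ and κ is λ-ineffable. Then for every family ⟨A_ξ : ξ < λ⟩ of subsets of P_κ(λ) there exist a set A ⊆ λ and a stationary set B ⊆ P_κ(λ) such that for every x ∈ B and every ξ ∈ x, x ∈ A_ξ if and only if ξ ∈ A. Consequently, defining the flip Ā_ξ = A_ξ if ξ ∈ A and Ā_ξ = P_κ(λ) ∖ A_ξ otherwise, the stationary set B is contained in the diagonal intersection Δ_{ξ<λ} Ā_ξ; in particular this flip of the family has stationary diagonal intersection. (This is the combinatorial forward direction of the paper's characterization of λ-ineffability via ultrafilters with stationary diagonal intersection.) -/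
open Cardinal

open scoped Classical

/-- `P_κ(α)`: the collection of subsets of `α` of cardinality less than `κ`.
(Here the set `λ` of ordinals below `λ` is identified with an abstract type `α`
of cardinality `λ`.) -/
def Pk (κ : Cardinal) (α : Type) : Set (Set α) :=
  {x | #x < κ}

/-- A collection `C` of subsets of `α` is closed (in `P_κ(α)`) if it is closed under
unions of `⊆`-increasing sequences of length `γ` with `0 < γ < κ`. -/
def ClosedIn (κ : Cardinal) {α : Type} (C : Set (Set α)) : Prop :=
  ∀ γ : Ordinal, 0 < γ → γ < κ.ord →
    ∀ f : Set.Iio γ → Set α,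
      (∀ i, f i ∈ C) →
      (∀ i j : Set.Iio γ, i.1 ≤ j.1 → f i ⊆ f j) →
      (⋃ i, f i) ∈ C

/-- A collection `C` of subsets of `α` is unbounded in `P_κ(α)` if every element
of `P_κ(α)` is contained in a member of `C`. -/
def UnboundedIn (κ : Cardinal) {α : Type} (C : Set (Set α)) : Prop :=
  ∀ x ∈ Pk κ α, ∃ y ∈ C, x ⊆ y

/-- `S` is stationary in `P_κ(α)`: it meets every club subset of `P_κ(α)`. -/
def StatIn (κ : Cardinal) {α : Type} (S : Set (Set α)) : Prop :=
  ∀ C ⊆ Pk κ α, ClosedIn κ C → UnboundedIn κ C → (S ∩ C).Nonempty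

/-- The diagonal intersection `Δ_{ξ} A_ξ = {x ∈ P_κ(α) : ∀ ξ ∈ x, x ∈ A_ξ}`. -/
def DiagInter (κ : Cardinal) {α : Type} (A : α → Set (Set α)) : Set (Set α) :=
  {x ∈ Pk κ α | ∀ ξ ∈ x, x ∈ A ξ}

/-- `κ` is `λ`-ineffable, where `λ = #α`: for every regressive-valued
`f : P_κ(λ) → P_κ(λ)` (i.e. `f x ⊆ x`) there is `A ⊆ λ` such that
`{x ∈ P_κ(λ) : A ∩ x = f x}` is stationary. -/
def LambdaIneffable (κ : Cardinal) (α : Type) : Prop :=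
  ∀ f : Set α → Set α, (∀ x ∈ Pk κ α, f x ⊆ x) →
    ∃ A : Set α, StatIn κ {x ∈ Pk κ α | A ∩ x = f x}

theorem statement0 (κ : Cardinal.{0}) (α : Type)
    (hκreg : κ.IsRegular) (hlamreg : (#α).IsRegular) (hle : κ ≤ #α)
    (hpow : #α ^< κ = #α)
    (hineff : LambdaIneffable κ α) :
    ∀ A : α → Set (Set α), (∀ ξ, A ξ ⊆ Pk κ α) →
      ∃ (S : Set α) (B : Set (Set α)),
        B ⊆ Pk κ α ∧ StatIn κ B ∧
        (∀ x ∈ B, ∀ ξ ∈ x, (x ∈ A ξ ↔ ξ ∈ S)) ∧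
        B ⊆ DiagInter κ (fun ξ => if ξ ∈ S then A ξ else Pk κ α \ A ξ) := by
  intro A hA
  obtain ⟨S, hS⟩ := hineff (fun x => {ξ ∈ x | x ∈ A ξ})
    (fun x _ ξ hξ => hξ.1)
  refine ⟨S, {x ∈ Pk κ α | S ∩ x = {ξ ∈ x | x ∈ A ξ}}, fun x hx => hx.1, hS, ?_, ?_⟩
  · intro x hx ξ hξ
    constructor
    · intro h
      have : ξ ∈ S ∩ x := hx.2 ▸ (⟨hξ, h⟩ : ξ ∈ {ξ ∈ x | x ∈ A ξ})
      exact this.1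
    · intro h
      have : ξ ∈ {ξ ∈ x | x ∈ A ξ} := hx.2 ▸ (⟨h, hξ⟩ : ξ ∈ S ∩ x)
      exact this.2
  · intro x hx
    refine ⟨hx.1, fun ξ hξ => ?_⟩
    by_cases hξS : ξ ∈ S
    · simp only [hξS, if_pos]
      have : ξ ∈ {ξ ∈ x | x ∈ A ξ} := hx.2 ▸ (⟨hξS, hξ⟩ : ξ ∈ S ∩ x)
      exact this.2
    · simp only [hξS, if_neg, not_false_iff]
      refine ⟨hx.1, fun h => hξS ?_⟩
      have : ξ ∈ S ∩ x := hx.2 ▸ (⟨hξ, h⟩ : ξ ∈ {ξ ∈ x | x ∈ A ξ})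
      exact this.1
end

section
/- Suppose κ ≤ λ are regular cardinals with λ^{<κ} = λ. If every family ⟨A_ξ : ξ < λ⟩ of subsets of P_κ(λ) admits a flip ⟨Ā_ξ : ξ < λ⟩ whose diagonal intersection Δ_{ξ<λ} Ā_ξ is stationary in P_κ(λ), then κ is λ-ineffable. (This is the combinatorial converse direction of the paper's characterization of λ-ineffability.) -/
open Cardinal

open scoped Classical

theorem statement1 (κ : Cardinal.{0}) (α : Type)
    (hκreg : κ.IsRegular) (hlamreg : (#α).IsRegular) (hle : κ ≤ #α)
    (hpow : #α ^< κ = #α)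
    (hflip : ∀ A : α → Set (Set α), (∀ ξ, A ξ ⊆ Pk κ α) →
      ∃ Abar : α → Set (Set α),
        (∀ ξ, Abar ξ = A ξ ∨ Abar ξ = Pk κ α \ A ξ) ∧
        StatIn κ (DiagInter κ Abar)) :
    LambdaIneffable κ α := by
  intro f hf
  set A : α → Set (Set α) := fun ξ => {x ∈ Pk κ α | ξ ∈ f x} with hAdef
  obtain ⟨Abar, hAbar, hstat⟩ := hflip A (fun ξ => Set.sep_subset _ _)
  refine ⟨{ξ | Abar ξ = A ξ}, ?_⟩
  intro C hC hclosed hunb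
  obtain ⟨x, hxD, hxC⟩ := hstat C hC hclosed hunb
  obtain ⟨hxP, hxA⟩ := hxD
  refine ⟨x, ⟨hxP, ?_⟩, hxC⟩
  ext ξ
  simp only [Set.mem_inter_iff, Set.mem_setOf_eq]
  constructor
  · rintro ⟨hξA, hξx⟩
    have hx := hxA ξ hξx
    rw [hξA] at hx
    exact hx.2
  · intro hξf
    have hξx : ξ ∈ x := hf x hxP hξf
    have hx := hxA ξ hξx
    refine ⟨?_, hξx⟩
    rcases hAbar ξ with h | h
    · exact h
    · rw [h] at hx
      exact absurd (⟨hxP, hξf⟩ : x ∈ A ξ) hx.2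
end

section
/- Let κ be an infinite regular cardinal and U a uniform p-point ultrafilter on κ. Let W be a family of at most κ many subsets of κ such that the intersection of any fewer than κ members of W is unbounded in κ (the strong κ-intersection property). Then there exists f : κ → κ such that the pushforward f_*(U) is a uniform p-point ultrafilter on κ containing every member of W; moreover, if U is κ-complete (closed under intersections of fewer than κ members), then so is f_*(U). In particular, every such family W extends to a p-point ultrafilter that is Rudin–Keisler below U. (This is the absolute, V-level form of the paper's theorem that a weak M-ultrafilter W belonging to a κ-model N admitting an N-p-point extends to an N-p-point.) -/
open Cardinal

/-- A subset of the ordinals below `κ` (realized as the type `κ.ord.ToType`)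
is bounded if it is contained in a proper initial segment. -/
def Bdd {C : Type*} [Preorder C] (X : Set C) : Prop :=
  ∃ b : C, X ⊆ Set.Iio b

/-- `U` is a p-point ultrafilter on `κ`: for every `κ`-indexed family of members
of `U` there is a member of `U` almost contained (modulo a bounded set) in
every member of the family. -/
def IsPPoint {κ : Cardinal} (U : Ultrafilter κ.ord.ToType) : Prop :=
  ∀ X : κ.ord.ToType → Set κ.ord.ToType, (∀ a, X a ∈ U) →
    ∃ Y ∈ U, ∀ a, Bdd (Y \ X a)

/-- `U` is uniform: it contains every set whose complement is bounded. -/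
def IsUniform {κ : Cardinal} (U : Ultrafilter κ.ord.ToType) : Prop :=
  ∀ X : Set κ.ord.ToType, Bdd Xᶜ → X ∈ U

/-- `U` is `κ`-complete: closed under intersections of families of fewer than
`κ` of its members. -/
def IsKappaComplete (κ : Cardinal) (U : Ultrafilter κ.ord.ToType) : Prop :=
  ∀ s : Set (Set κ.ord.ToType), #s < κ → (∀ X ∈ s, X ∈ U) → ⋂₀ s ∈ U

/-! Send each `α < κ` to some `f α ≥ α` lying in `⋂_{i ≤ α} W i`, which exists because fewer
than `κ` sets are intersected. Then `f⁻¹' (W i)` contains the final segment `[i, κ)`, so every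
`W i` lies in the pushforward, and `α ≤ f α` keeps it uniform. Completeness survives any
pushforward, and so does being a p-point on a regular `κ`: the image of a bounded set has
size `< κ`, hence is bounded again. -/

lemma Bdd.mono {C : Type*} [Preorder C] {X Y : Set C} (h : X ⊆ Y) (hY : Bdd Y) : Bdd X :=
  let ⟨b, hb⟩ := hY
  ⟨b, h.trans hb⟩

lemma bdd_of_mk_lt_cof {C : Type*} [LinearOrder C] {X : Set C} (hX : #X < Order.cof C) :
    Bdd X := by
  have hX_not_cofinal : ¬ IsCofinal X := fun hcof => (Order.cof_le hcof).not_gt hX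
  simp only [IsCofinal, not_forall, not_exists, not_and, not_le] at hX_not_cofinal
  obtain ⟨b, hb⟩ := hX_not_cofinal
  exact ⟨b, hb⟩

lemma mk_Iio_ord_toType_lt {κ : Cardinal} (b : κ.ord.ToType) : #(Set.Iio b) < κ := by
  simpa using mk_Iio_lt b (by simp)

lemma IsUniform.mem_of_Ici_subset {κ : Cardinal} {U : Ultrafilter κ.ord.ToType}
    (hU : IsUniform U) {X : Set κ.ord.ToType} {i : κ.ord.ToType} (hX : Set.Ici i ⊆ X) :
    X ∈ U :=
  hU X ⟨i, fun _ ha => Set.mem_Iio.2 <| lt_of_not_ge fun hi => ha (hX hi)⟩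

lemma IsUniform.map_of_le {κ : Cardinal} {U : Ultrafilter κ.ord.ToType} (hU : IsUniform U)
    {f : κ.ord.ToType → κ.ord.ToType} (hf : ∀ a, a ≤ f a) : IsUniform (U.map f) := by
  rintro X ⟨b, hb⟩
  exact hU _ ⟨b, fun a ha => (hf a).trans_lt (hb ha)⟩

lemma IsPPoint.map {κ : Cardinal} (hκ : κ.IsRegular) {U : Ultrafilter κ.ord.ToType}
    (hU : IsPPoint U) (f : κ.ord.ToType → κ.ord.ToType) : IsPPoint (U.map f) := by
  intro X hX
  obtain ⟨Y, hY, hYX⟩ := hU (fun a => f ⁻¹' X a) hX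
  refine ⟨f '' Y, Ultrafilter.mem_map.2 <|
    Filter.mem_of_superset hY (Set.subset_preimage_image f Y), fun a => ?_⟩
  obtain ⟨b, hb⟩ := hYX a
  have hsub : f '' Y \ X a ⊆ f '' Set.Iio b := by
    rintro _ ⟨⟨y, hy, rfl⟩, hyX⟩
    exact ⟨y, hb ⟨hy, hyX⟩, rfl⟩
  refine (bdd_of_mk_lt_cof ?_).mono hsub
  rw [Ordinal.cof_toType, hκ.cof_ord]
  exact mk_image_le.trans_lt (mk_Iio_ord_toType_lt b)

lemma IsKappaComplete.map {κ : Cardinal} {U : Ultrafilter κ.ord.ToType}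
    (hU : IsKappaComplete κ U) (f : κ.ord.ToType → κ.ord.ToType) :
    IsKappaComplete κ (U.map f) := by
  intro s hs hsU
  show f ⁻¹' ⋂₀ s ∈ U
  rw [Set.preimage_sInter, ← Set.sInter_image]
  refine hU _ (mk_image_le.trans_lt hs) ?_
  rintro _ ⟨X, hX, rfl⟩
  exact hsU X hX

lemma exists_le_forall_le_mem {κ : Cardinal} (hκ : κ.IsRegular)
    {W : κ.ord.ToType → Set κ.ord.ToType}
    (hW : ∀ s : Set κ.ord.ToType, #s < κ → ¬ Bdd (⋂ i ∈ s, W i)) (a : κ.ord.ToType) :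
    ∃ x, a ≤ x ∧ ∀ i ≤ a, x ∈ W i := by
  have := Cardinal.noMaxOrder hκ.aleph0_le
  obtain ⟨b, hab⟩ := exists_gt a
  have hIic : #(Set.Iic a) < κ :=
    (mk_le_mk_of_subset fun _ hi => lt_of_le_of_lt hi hab).trans_lt (mk_Iio_ord_toType_lt b)
  by_contra! hnone
  refine hW _ hIic ⟨a, fun x hx => Set.mem_Iio.2 <| lt_of_not_ge fun hax => ?_⟩
  obtain ⟨i, hia, hxi⟩ := hnone x hax
  exact hxi (Set.mem_iInter₂.1 hx i hia)

theorem statement3 (κ : Cardinal.{0}) (hκreg : κ.IsRegular)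
    (U : Ultrafilter κ.ord.ToType)
    (hU_uniform : IsUniform U) (hU_pp : IsPPoint U)
    (W : κ.ord.ToType → Set κ.ord.ToType)
    (hW : ∀ s : Set κ.ord.ToType, #s < κ → ¬ Bdd (⋂ i ∈ s, W i)) :
    ∃ f : κ.ord.ToType → κ.ord.ToType,
      IsUniform (U.map f) ∧ IsPPoint (U.map f) ∧
      (∀ i, W i ∈ U.map f) ∧
      (IsKappaComplete κ U → IsKappaComplete κ (U.map f)) := by
  choose f hf_ge hf_mem using exists_le_forall_le_mem hκreg hW
  exact ⟨f, hU_uniform.map_of_le hf_ge, hU_pp.map hκreg f,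
    fun i => hU_uniform.mem_of_Ici_subset fun a hia => hf_mem a i hia,
    fun hU_complete => hU_complete.map f⟩
end
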